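/- arXiv:1304.4661 — 6 statements merged into one kernel-verified Lean document; each statement's English description precedes it below -/
import Mathlib

section
/- For every 0 ≤ k ≤ n and every pair of vertices s and t, the pruned landmark labels give exactly the same query values as the naive landmark labels: Query(s, t, L'_k) = Query(s, t, L_k). -/
open SimpleGraph

/-- The 2-hop query value computed from a label assignment `L`:
the minimum of `d₁ + d₂` over common label vertices, `∞` if none. -/
noncomputable def Query {V : Type*} (L : V → Set (V × ℕ∞)) (s t : V) : ℕ∞ :=
  sInf {x : ℕ∞ | ∃ w d₁ d₂, (w, d₁) ∈ L s ∧ (w, d₂) ∈ L t ∧ x = d₁ + d₂}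

/- The naive landmark labels `L_k`. -/
open Classical in
noncomputable def naiveL {V : Type*} (G : SimpleGraph V) (ord : ℕ → V) :
    ℕ → V → Set (V × ℕ∞)
  | 0 => fun _ => ∅
  | (k + 1) => fun u =>
      if G.edist (ord (k + 1)) u < ⊤ then
        naiveL G ord k u ∪ {(ord (k + 1), G.edist (ord (k + 1)) u)}
      else naiveL G ord k u

/- The pruned landmark labels `L'_k`. -/
open Classical in
noncomputable def prunedL {V : Type*} (G : SimpleGraph V) (ord : ℕ → V) :
    ℕ → V → Set (V × ℕ∞)
  | 0 => fun _ => ∅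
  | (k + 1) => fun u =>
      if G.edist (ord (k + 1)) u < ⊤ ∧
          G.edist (ord (k + 1)) u < Query (prunedL G ord k) (ord (k + 1)) u then
        prunedL G ord k u ∪ {(ord (k + 1), G.edist (ord (k + 1)) u)}
      else prunedL G ord k u

/-- `P_G(s,t)`: the set of vertices on shortest paths between `s` and `t`. -/
def PG {V : Type*} (G : SimpleGraph V) (s t : V) : Set V :=
  {w | G.edist s w + G.edist w t = G.edist s t}
lemma Query_comm {V : Type*} (L : V → Set (V × ℕ∞)) (s t : V) :
    Query L s t = Query L t s := by
  unfold Query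
  congr 1
  ext x
  constructor <;> rintro ⟨w, d₁, d₂, h1, h2, rfl⟩ <;>
    exact ⟨w, d₂, d₁, h2, h1, add_comm _ _⟩

lemma prunedL_subset_naiveL {V : Type*} (G : SimpleGraph V) (ord : ℕ → V) :
    ∀ k u, prunedL G ord k u ⊆ naiveL G ord k u := by
  intro k
  induction k with
  | zero => intro u; simp [prunedL, naiveL]
  | succ k ih =>
    intro u
    rw [prunedL, naiveL]; dsimp only
    split_ifs with h1 h2 h3
    · exact Set.union_subset_union_left _ (ih u)
    · exact absurd h1.1 h2
    · exact (ih u).trans Set.subset_union_left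
    · exact ih u

lemma prunedL_mono {V : Type*} (G : SimpleGraph V) (ord : ℕ → V) {j k : ℕ}
    (h : j ≤ k) (u : V) : prunedL G ord j u ⊆ prunedL G ord k u := by
  induction k with
  | zero => simp_all
  | succ k ih =>
    rcases Nat.lt_or_ge j (k+1) with h' | h'
    · have := ih (Nat.lt_succ_iff.mp h')
      rw [prunedL]; dsimp only
      split_ifs with hc
      · exact this.trans Set.subset_union_left
      · exact this
    · have : j = k + 1 := le_antisymm h h'
      subst this; exact subset_rfl

lemma mem_prunedL_shape {V : Type*} (G : SimpleGraph V) (ord : ℕ → V) :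
    ∀ k u w d, (w, d) ∈ prunedL G ord k u →
      ∃ i, 1 ≤ i ∧ i ≤ k ∧ w = ord i ∧ d = G.edist w u ∧ G.edist w u < ⊤ := by
  intro k
  induction k with
  | zero => intro u w d h; simp [prunedL] at h
  | succ k ih =>
    intro u w d h
    rw [prunedL] at h; dsimp only at h
    split_ifs at h with hc
    · rcases h with h | h
      · obtain ⟨i, h1, h2, h3, h4, h5⟩ := ih u w d h
        exact ⟨i, h1, h2.trans (Nat.le_succ k), h3, h4, h5⟩
      · simp only [Set.mem_singleton_iff, Prod.mk.injEq] at h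
        exact ⟨k + 1, Nat.succ_le_succ (Nat.zero_le k), le_rfl, h.1,
          by rw [h.1]; exact h.2, by rw [h.1]; exact hc.1⟩
    · obtain ⟨i, h1, h2, h3, h4, h5⟩ := ih u w d h
      exact ⟨i, h1, h2.trans (Nat.le_succ k), h3, h4, h5⟩

lemma mem_naiveL_shape {V : Type*} (G : SimpleGraph V) (ord : ℕ → V) :
    ∀ k u w d, (w, d) ∈ naiveL G ord k u →
      ∃ i, 1 ≤ i ∧ i ≤ k ∧ w = ord i ∧ d = G.edist w u ∧ G.edist w u < ⊤ := by
  intro k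
  induction k with
  | zero => intro u w d h; simp [naiveL] at h
  | succ k ih =>
    intro u w d h
    rw [naiveL] at h; dsimp only at h
    split_ifs at h with hc
    · rcases h with h | h
      · obtain ⟨i, h1, h2, h3, h4, h5⟩ := ih u w d h
        exact ⟨i, h1, h2.trans (Nat.le_succ k), h3, h4, h5⟩
      · simp only [Set.mem_singleton_iff, Prod.mk.injEq] at h
        exact ⟨k + 1, Nat.succ_le_succ (Nat.zero_le k), le_rfl, h.1,
          by rw [h.1]; exact h.2, by rw [h.1]; exact hc⟩
    · obtain ⟨i, h1, h2, h3, h4, h5⟩ := ih u w d h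
      exact ⟨i, h1, h2.trans (Nat.le_succ k), h3, h4, h5⟩

lemma query_pruned_le {V : Type*} (G : SimpleGraph V) (ord : ℕ → V) :
    ∀ j k s t, 1 ≤ j → j ≤ k →
      G.edist (ord j) s < ⊤ → G.edist (ord j) t < ⊤ →
      Query (prunedL G ord k) s t ≤ G.edist (ord j) s + G.edist (ord j) t := by
  intro j
  induction j using Nat.strong_induction_on with
  | _ j IH =>
  intro k s t hj1 hjk hs ht
  obtain ⟨m, rfl⟩ : ∃ m, j = m + 1 := ⟨j - 1, (Nat.succ_pred_eq_of_pos hj1).symm⟩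
  -- key handles the case where the landmark at step m+1 got pruned for s
  have key : ∀ s t : V, G.edist (ord (m+1)) s < ⊤ → G.edist (ord (m+1)) t < ⊤ →
      ¬ (G.edist (ord (m+1)) s < Query (prunedL G ord m) (ord (m+1)) s) →
      Query (prunedL G ord k) s t ≤ G.edist (ord (m+1)) s + G.edist (ord (m+1)) t := by
    intro s t hs ht hnot
    have hQ : Query (prunedL G ord m) (ord (m+1)) s ≤ G.edist (ord (m+1)) s :=
      not_lt.mp hnot
    have hlt : Query (prunedL G ord m) (ord (m+1)) s < G.edist (ord (m+1)) s + 1 :=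
      lt_of_le_of_lt hQ ((ENat.lt_add_one_iff hs.ne).mpr le_rfl)
    rw [Query, sInf_lt_iff] at hlt
    obtain ⟨x, ⟨w, d₁, d₂, h1, h2, rfl⟩, hx⟩ := hlt
    have hxle : d₁ + d₂ ≤ G.edist (ord (m+1)) s := (ENat.lt_add_one_iff hs.ne).mp hx
    obtain ⟨i, hi1, him, hw, hd₁, hd₁top⟩ := mem_prunedL_shape G ord m (ord (m+1)) w d₁ h1
    obtain ⟨i', _, _, _, hd₂, _⟩ := mem_prunedL_shape G ord m s w d₂ h2
    have hws : G.edist w s < ⊤ := by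
      rw [← hd₂]
      exact lt_of_le_of_lt ((le_add_self).trans hxle) hs
    have hwt : G.edist w t < ⊤ := by
      refine lt_of_le_of_lt (G.edist_triangle (v := ord (m+1))) ?_
      exact ENat.add_lt_top.mpr ⟨hd₁top, ht⟩
    have hik : i ≤ k := le_trans (him.trans (Nat.le_succ m)) hjk
    have := IH i (Nat.lt_succ_of_le him) k s t hi1 hik (hw ▸ hws) (hw ▸ hwt)
    rw [← hw] at this
    refine this.trans ?_
    calc G.edist w s + G.edist w t
        ≤ d₂ + (d₁ + G.edist (ord (m+1)) t) := by
          rw [hd₂]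
          refine add_le_add le_rfl ?_
          rw [hd₁]
          exact G.edist_triangle
      _ = (d₁ + d₂) + G.edist (ord (m+1)) t := by ring
      _ ≤ G.edist (ord (m+1)) s + G.edist (ord (m+1)) t := add_le_add hxle le_rfl
  by_cases hCs : G.edist (ord (m+1)) s < Query (prunedL G ord m) (ord (m+1)) s
  · by_cases hCt : G.edist (ord (m+1)) t < Query (prunedL G ord m) (ord (m+1)) t
    · -- the landmark is in both pruned labels
      have hmem : ∀ u : V, G.edist (ord (m+1)) u < ⊤ →
          G.edist (ord (m+1)) u < Query (prunedL G ord m) (ord (m+1)) u →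
          (ord (m+1), G.edist (ord (m+1)) u) ∈ prunedL G ord k u := by
        intro u hu hc
        refine prunedL_mono G ord hjk u ?_
        rw [prunedL]; dsimp only; rw [if_pos ⟨hu, hc⟩]
        exact Set.mem_union_right _ rfl
      exact sInf_le ⟨ord (m+1), _, _, hmem s hs hCs, hmem t ht hCt, rfl⟩
    · rw [Query_comm]
      rw [add_comm]
      exact key t s ht hs hCt
  · exact key s t hs ht hCs

/-- Theorem 1 of the paper: for every `0 ≤ k ≤ n` and every pair of vertices `s, t`,
the pruned landmark labels give exactly the same query values as the naive ones. -/
theorem query_prunedL_eq_query_naiveL {V : Type*} [Fintype V] (G : SimpleGraph V)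
    (n : ℕ) (ord : ℕ → V)
    (hinj : ∀ i ∈ Finset.Icc 1 n, ∀ j ∈ Finset.Icc 1 n, ord i = ord j → i = j)
    (hsurj : ∀ u : V, ∃ i ∈ Finset.Icc 1 n, ord i = u)
    (k : ℕ) (hk : k ≤ n) (s t : V) :
    Query (prunedL G ord k) s t = Query (naiveL G ord k) s t := by
  apply le_antisymm
  · apply le_sInf
    rintro b ⟨w, d₁, d₂, h1, h2, rfl⟩
    obtain ⟨i, hi1, hik, hw, hd₁, hs⟩ := mem_naiveL_shape G ord k s w d₁ h1
    obtain ⟨i', _, _, _, hd₂, ht⟩ := mem_naiveL_shape G ord k t w d₂ h2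
    rw [hd₁, hd₂]
    subst hw
    exact query_pruned_le G ord i k s t hi1 hik hs ht
  · apply sInf_le_sInf
    rintro x ⟨w, d₁, d₂, h1, h2, rfl⟩
    exact ⟨w, d₁, d₂, prunedL_subset_naiveL G ord k s h1,
      prunedL_subset_naiveL G ord k t h2, rfl⟩
end

section
/- Key induction claim of the correctness proof: let 1 ≤ j ≤ n and let s be a vertex with d_G(v_j, s) < ∞ such that v_i ∉ P_G(v_j, s) for every i < j. Then for every vertex u ∈ P_G(v_j, s) it holds that Query(v_j, u, L'_{j-1}) > d_G(v_j, u), and consequently (v_j, d_G(v_j, u)) ∈ L'_j(u) (the j-th pruned BFS visits and labels all vertices on shortest paths between v_j and s without pruning). -/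
open SimpleGraph

lemma prunedL_mem_struct {V : Type*} (G : SimpleGraph V) (ord : ℕ → V) :
    ∀ k u w d, (w, d) ∈ prunedL G ord k u →
      ∃ i, 1 ≤ i ∧ i ≤ k ∧ w = ord i ∧ d = G.edist w u := by
  intro k
  induction k with
  | zero => intro u w d h; simp [prunedL] at h
  | succ k ih =>
    intro u w d h
    simp only [prunedL] at h
    split at h
    · rcases h with h | h
      · obtain ⟨i, h1, h2, h3, h4⟩ := ih u w d h
        exact ⟨i, h1, h2.trans (Nat.le_succ k), h3, h4⟩
      · simp only [Set.mem_singleton_iff, Prod.mk.injEq] at h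
        obtain ⟨rfl, rfl⟩ := h
        exact ⟨k + 1, Nat.succ_le_succ (Nat.zero_le k), le_rfl, rfl, rfl⟩
    · obtain ⟨i, h1, h2, h3, h4⟩ := ih u w d h
      exact ⟨i, h1, h2.trans (Nat.le_succ k), h3, h4⟩

/-- Key induction claim of the correctness proof: if `1 ≤ j ≤ n`, `d_G(v_j, s) < ∞`, and
no vertex of rank smaller than `j` lies on a shortest path between `v_j` and `s`, then
every vertex `u` on a shortest path between `v_j` and `s` satisfies
`Query(v_j, u, L'_{j-1}) > d_G(v_j, u)`, and hence `(v_j, d_G(v_j, u)) ∈ L'_j(u)`. -/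
theorem prunedL_visits_shortest_paths {V : Type*} [Fintype V] (G : SimpleGraph V)
    (n : ℕ) (ord : ℕ → V)
    (hinj : ∀ i ∈ Finset.Icc 1 n, ∀ j ∈ Finset.Icc 1 n, ord i = ord j → i = j)
    (hsurj : ∀ u : V, ∃ i ∈ Finset.Icc 1 n, ord i = u)
    (j : ℕ) (hj1 : 1 ≤ j) (hjn : j ≤ n) (s : V) (hfin : G.edist (ord j) s < ⊤)
    (hmin : ∀ i, 1 ≤ i → i < j → ord i ∉ PG G (ord j) s) :
    ∀ u ∈ PG G (ord j) s,
      G.edist (ord j) u < Query (prunedL G ord (j - 1)) (ord j) u ∧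
      (ord j, G.edist (ord j) u) ∈ prunedL G ord j u := by
  intro u hu
  have hd : G.edist (ord j) u + G.edist u s = G.edist (ord j) s := hu
  have hufin : G.edist (ord j) u < ⊤ :=
    lt_of_le_of_lt (le_trans le_self_add (le_of_eq hd)) hfin
  have hq : G.edist (ord j) u < Query (prunedL G ord (j - 1)) (ord j) u := by
    rw [Query, ← ENat.add_one_le_iff hufin.ne]
    apply le_sInf
    rintro x ⟨w, d₁, d₂, h1, h2, rfl⟩
    obtain ⟨i, hi1, hik, rfl, rfl⟩ := prunedL_mem_struct G ord _ _ _ _ h1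
    obtain ⟨i', _, _, _, rfl⟩ := prunedL_mem_struct G ord _ _ _ _ h2
    by_contra hcon
    push_neg at hcon
    have hle : G.edist (ord j) (ord i) + G.edist (ord i) u ≤ G.edist (ord j) u := by
      have := ENat.lt_add_one_iff hufin.ne |>.mp hcon
      rwa [G.edist_comm (u := ord i) (v := ord j)] at this
    have htri : G.edist (ord j) u ≤ G.edist (ord j) (ord i) + G.edist (ord i) u :=
      G.edist_triangle
    have heq : G.edist (ord j) (ord i) + G.edist (ord i) u = G.edist (ord j) u :=
      le_antisymm hle htri
    have hPG : ord i ∈ PG G (ord j) s := by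
      have h1 : G.edist (ord j) (ord i) + G.edist (ord i) s ≤ G.edist (ord j) s := by
        calc G.edist (ord j) (ord i) + G.edist (ord i) s
            ≤ G.edist (ord j) (ord i) + (G.edist (ord i) u + G.edist u s) := by
              gcongr; exact G.edist_triangle
          _ = (G.edist (ord j) (ord i) + G.edist (ord i) u) + G.edist u s := by ring
          _ = G.edist (ord j) u + G.edist u s := by rw [heq]
          _ = G.edist (ord j) s := hd
      exact le_antisymm h1 G.edist_triangle
    exact hmin i hi1 (Nat.lt_of_le_of_lt hik (Nat.sub_lt hj1 Nat.one_pos)) hPG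
  refine ⟨hq, ?_⟩
  obtain ⟨k, rfl⟩ : ∃ k, j = k + 1 := ⟨j - 1, (Nat.succ_pred_eq_of_pos hj1).symm⟩
  simp only [prunedL]
  rw [if_pos]
  · exact Or.inr rfl
  · refine ⟨hufin, ?_⟩
    simpa using hq
end

section
/- Dynamic-programming recurrence for S^{-1} in bit-parallel BFS: for every vertex v with 2 ≤ d_G(r, v) < ∞, S^{-1}_r(v) = { u ∈ S_r : there exists a neighbor w of v with d_G(r, w) = d_G(r, v) - 1 and u ∈ S^{-1}_r(w) }. -/
open SimpleGraph

/-- `S^{-1}_r(v)`: the vertices `u ∈ S_r` with `d_G(u, v) - d_G(r, v) = -1`,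
i.e. `d_G(u, v) + 1 = d_G(r, v)`. -/
def Sneg {V : Type*} (G : SimpleGraph V) (r : V) (S : Set V) (v : V) : Set V :=
  {u ∈ S | G.edist u v + 1 = G.edist r v}

/-- `S^0_r(v)`: the vertices `u ∈ S_r` with `d_G(u, v) - d_G(r, v) = 0`,
i.e. `d_G(u, v) = d_G(r, v)`. -/
def Szero {V : Type*} (G : SimpleGraph V) (r : V) (S : Set V) (v : V) : Set V :=
  {u ∈ S | G.edist u v = G.edist r v}


lemma exists_adj_edist_eq {V : Type*} (G : SimpleGraph V) {u v : V} {n : ℕ}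
    (h : G.edist u v = (n : ℕ∞) + 1) : ∃ w, G.Adj w v ∧ G.edist u w = n := by
  have hne : u ≠ v := by
    intro he; rw [he, edist_self] at h; exact (by simp : (↑n + 1 : ℕ∞) ≠ 0) h.symm
  have h' : G.edist u v = ((n+1 : ℕ) : ℕ∞) := by push_cast; exact h
  obtain ⟨p, hp⟩ := SimpleGraph.exists_walk_of_edist_eq_coe h'
  obtain ⟨w, hadj, q, hq⟩ := SimpleGraph.Walk.exists_eq_cons_of_ne (Ne.symm hne) p.reverse
  have hqlen : q.length = n := by
    have := congrArg SimpleGraph.Walk.length hq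
    simp [SimpleGraph.Walk.length_reverse, hp] at this
    omega
  refine ⟨w, hadj.symm, le_antisymm ?_ ?_⟩
  · calc G.edist u w ≤ q.reverse.length := SimpleGraph.edist_le _
    _ = n := by simp [hqlen]
  · have htri : G.edist u v ≤ G.edist u w + G.edist w v := SimpleGraph.edist_triangle
    rw [edist_eq_one_iff_adj.mpr hadj.symm, h] at htri
    exact (WithTop.add_le_add_iff_right WithTop.one_ne_top).mp htri



theorem sneg_recurrence' {V : Type*} (G : SimpleGraph V) (r : V) (S : Set V)
    (hS : S ⊆ G.neighborSet r) (v : V)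
    (h2 : 2 ≤ G.edist r v) (hfin : G.edist r v < ⊤) :
    {u ∈ S | G.edist u v + 1 = G.edist r v} =
      {u ∈ S | ∃ w, G.Adj v w ∧ G.edist r w + 1 = G.edist r v ∧ u ∈ {u ∈ S | G.edist u w + 1 = G.edist r w}} := by
  obtain ⟨k, hk⟩ := WithTop.ne_top_iff_exists.mp hfin.ne
  have hk2 : 2 ≤ k := by
    rw [← hk] at h2
    exact Nat.cast_le.mp h2
  obtain ⟨m, rfl⟩ : ∃ m, k = m + 2 := ⟨k - 2, by omega⟩
  have hk' : G.edist r v = ((m:ℕ∞) + 1) + 1 := by rw [← hk]; norm_cast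
  ext u
  simp only [Set.mem_setOf_eq]
  constructor
  · rintro ⟨hu, hd⟩
    have hru : G.edist r u = 1 := edist_eq_one_iff_adj.mpr (hS hu)
    have huv : G.edist u v = (m:ℕ∞) + 1 := by
      rw [hk'] at hd
      exact (WithTop.add_le_add_iff_right WithTop.one_ne_top).mp hd.le |>.antisymm
        ((WithTop.add_le_add_iff_right WithTop.one_ne_top).mp hd.ge)
    obtain ⟨w, hadj, hw⟩ := exists_adj_edist_eq G huv
    have hub : G.edist r w ≤ (m:ℕ∞) + 1 := by
      calc G.edist r w ≤ G.edist r u + G.edist u w := SimpleGraph.edist_triangle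
        _ = (m:ℕ∞) + 1 := by rw [hru, hw, add_comm]
    have hlb : ((m:ℕ∞) + 1) + 1 ≤ G.edist r w + 1 := by
      calc ((m:ℕ∞)+1)+1 = G.edist r v := hk'.symm
        _ ≤ G.edist r w + G.edist w v := SimpleGraph.edist_triangle
        _ = G.edist r w + 1 := by rw [edist_eq_one_iff_adj.mpr hadj]
    have hrw : G.edist r w = (m:ℕ∞) + 1 :=
      hub.antisymm ((WithTop.add_le_add_iff_right WithTop.one_ne_top).mp hlb)
    exact ⟨hu, w, hadj.symm, by rw [hrw, hk'], hu, by rw [hrw, hw]⟩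
  · rintro ⟨hu, w, hadj, hrw, -, huw⟩
    have hru : G.edist r u = 1 := edist_eq_one_iff_adj.mpr (hS hu)
    refine ⟨hu, ?_⟩
    have h1 : G.edist u v ≤ G.edist r w := by
      calc G.edist u v ≤ G.edist u w + G.edist w v := SimpleGraph.edist_triangle
        _ = G.edist u w + 1 := by rw [edist_eq_one_iff_adj.mpr hadj.symm]
        _ = G.edist r w := huw
    have h2' : G.edist r v ≤ G.edist u v + 1 := by
      calc G.edist r v ≤ G.edist r u + G.edist u v := SimpleGraph.edist_triangle
        _ = G.edist u v + 1 := by rw [hru, add_comm]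
    have h3 : G.edist r w ≤ G.edist u v := by
      have : G.edist r w + 1 ≤ G.edist u v + 1 := by rw [hrw]; exact h2'
      exact (WithTop.add_le_add_iff_right WithTop.one_ne_top).mp this
    rw [h1.antisymm h3, hrw]

/-- Dynamic-programming recurrence for `S^{-1}` in bit-parallel BFS: for every vertex
`v` with `2 ≤ d_G(r, v) < ∞`, `S^{-1}_r(v)` equals the set of `u ∈ S_r` having a
neighbor `w` of `v` with `d_G(r, w) = d_G(r, v) - 1` and `u ∈ S^{-1}_r(w)`. -/
theorem sneg_recurrence {V : Type*} (G : SimpleGraph V) (r : V) (S : Set V)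
    (hS : S ⊆ G.neighborSet r) (v : V)
    (h2 : 2 ≤ G.edist r v) (hfin : G.edist r v < ⊤) :
    Sneg G r S v =
      {u ∈ S | ∃ w, G.Adj v w ∧ G.edist r w + 1 = G.edist r v ∧ u ∈ Sneg G r S w} := by
  exact sneg_recurrence' G r S hS v h2 hfin
end

section
/- Dynamic-programming recurrence for S^0 in bit-parallel BFS: for every vertex v with 1 ≤ d_G(r, v) < ∞, define R(v) = { u ∈ S_r : ∃ neighbor w of v with d_G(r, w) = d_G(r, v) - 1 and u ∈ S^0_r(w) } ∪ { u ∈ S_r : ∃ neighbor w of v with d_G(r, w) = d_G(r, v) and u ∈ S^{-1}_r(w) }. Then S^0_r(v) ⊆ R(v) and R(v) ⊆ S^{-1}_r(v) ∪ S^0_r(v). -/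
open SimpleGraph

lemma enat_aux {a : ℕ∞} {n : ℕ} (h1 : a ≤ n) (h2 : (n : ℕ∞) ≤ a + 1) :
    a = n ∨ a + 1 = n := by
  lift a to ℕ using (h1.trans_lt (ENat.coe_lt_top n)).ne
  have h1' : a ≤ n := by exact_mod_cast h1
  have h2' : n ≤ a + 1 := by exact_mod_cast h2
  rcases Nat.eq_or_lt_of_le h1' with h | h
  · exact Or.inl (by exact_mod_cast h)
  · right; exact_mod_cast (by omega : a + 1 = n)

/-- Dynamic-programming recurrence for `S^0` in bit-parallel BFS: for every vertex `v`
with `1 ≤ d_G(r, v) < ∞`, setting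
`R(v) = {u ∈ S_r | ∃ w ∈ N_G(v), d_G(r, w) = d_G(r, v) - 1 ∧ u ∈ S^0_r(w)}
      ∪ {u ∈ S_r | ∃ w ∈ N_G(v), d_G(r, w) = d_G(r, v) ∧ u ∈ S^{-1}_r(w)}`,
we have `S^0_r(v) ⊆ R(v)` and `R(v) ⊆ S^{-1}_r(v) ∪ S^0_r(v)`. -/
theorem szero_recurrence {V : Type*} (G : SimpleGraph V) (r : V) (S : Set V)
    (hS : S ⊆ G.neighborSet r) (v : V)
    (h1 : 1 ≤ G.edist r v) (hfin : G.edist r v < ⊤) :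
    Szero G r S v ⊆
      ({u ∈ S | ∃ w, G.Adj v w ∧ G.edist r w + 1 = G.edist r v ∧ u ∈ Szero G r S w} ∪
       {u ∈ S | ∃ w, G.Adj v w ∧ G.edist r w = G.edist r v ∧ u ∈ Sneg G r S w}) ∧
    ({u ∈ S | ∃ w, G.Adj v w ∧ G.edist r w + 1 = G.edist r v ∧ u ∈ Szero G r S w} ∪
     {u ∈ S | ∃ w, G.Adj v w ∧ G.edist r w = G.edist r v ∧ u ∈ Sneg G r S w}) ⊆
      Sneg G r S v ∪ Szero G r S v := by
  obtain ⟨n, hn⟩ : ∃ n : ℕ, G.edist r v = n := ⟨(G.edist r v).toNat, (ENat.coe_toNat hfin.ne).symm⟩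
  have hn1 : 1 ≤ n := by exact_mod_cast hn ▸ h1
  -- edist from r to any u ∈ S is 1
  have hru : ∀ u ∈ S, G.edist r u = 1 := fun u hu => edist_eq_one_iff_adj.mpr (hS hu)
  constructor
  · rintro u ⟨huS, huv⟩
    rw [hn] at huv
    -- get shortest walk from v to u
    have hvu : G.edist v u = n := by rw [edist_comm]; exact huv
    obtain ⟨p, hp⟩ := exists_walk_of_edist_eq_coe hvu
    cases p with
    | nil => simp at hp; omega
    | cons hadj q =>
      rename_i w
      simp only [Walk.length_cons] at hp
      have hq : G.edist u w ≤ (n - 1 : ℕ) := by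
        rw [edist_comm]
        calc G.edist w u ≤ q.length := edist_le q
        _ = ((n - 1 : ℕ) : ℕ∞) := by exact_mod_cast (by omega : q.length = n - 1)
      have huw_ge : ((n - 1 : ℕ) : ℕ∞) + 1 ≤ G.edist u w + 1 := by
        have : G.edist u v ≤ G.edist u w + G.edist w v := SimpleGraph.edist_triangle
        have hwv : G.edist w v ≤ 1 := by
          rw [edist_comm]; exact le_of_eq (edist_eq_one_iff_adj.mpr hadj)
        have : (n : ℕ∞) ≤ G.edist u w + 1 := by
          rw [← huv]; exact le_trans this (add_le_add_right hwv _)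
        calc ((n - 1 : ℕ) : ℕ∞) + 1 = ((n - 1 + 1 : ℕ) : ℕ∞) := by push_cast; ring
        _ = (n : ℕ∞) := by norm_cast; omega
        _ ≤ _ := this
      have huw : G.edist u w = ((n - 1 : ℕ) : ℕ∞) :=
        le_antisymm hq (by exact_mod_cast (ENat.add_le_add_iff_right (by simp)).mp huw_ge)
      -- bounds on edist r w
      have hrw_le : G.edist r w ≤ n := by
        calc G.edist r w ≤ G.edist r u + G.edist u w := SimpleGraph.edist_triangle
        _ = 1 + ((n - 1 : ℕ) : ℕ∞) := by rw [hru u huS, huw]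
        _ = ((1 + (n - 1) : ℕ) : ℕ∞) := by push_cast; ring
        _ = (n : ℕ∞) := by norm_cast; omega
      have hrw_ge : (n : ℕ∞) ≤ G.edist r w + 1 := by
        rw [← hn]
        calc G.edist r v ≤ G.edist r w + G.edist w v := SimpleGraph.edist_triangle
        _ ≤ G.edist r w + 1 := add_le_add_right
            (by rw [SimpleGraph.edist_comm]; exact le_of_eq (edist_eq_one_iff_adj.mpr hadj)) _
      rcases enat_aux hrw_le hrw_ge with h | h
      · -- edist r w = n : u ∈ Sneg w, second set
        refine Or.inr ⟨huS, w, hadj, by rw [h, hn], huS, ?_⟩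
        rw [huw, h]
        calc ((n - 1 : ℕ) : ℕ∞) + 1 = ((n - 1 + 1 : ℕ) : ℕ∞) := by push_cast; ring
        _ = (n : ℕ∞) := by norm_cast; omega
      · -- edist r w + 1 = n : u ∈ Szero w, first set
        refine Or.inl ⟨huS, w, hadj, by rw [h, hn], huS, ?_⟩
        rw [huw]
        have : G.edist r w = ((n - 1 : ℕ) : ℕ∞) := by
          have hne : G.edist r w ≠ ⊤ := fun ht => by simp [ht] at h
          lift G.edist r w to ℕ using hne with m
          have : m + 1 = n := by exact_mod_cast h
          exact_mod_cast (by omega : m = n - 1)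
        rw [this]
  · rintro u (⟨huS, w, hadj, hrw, _, huw⟩ | ⟨huS, w, hadj, hrw, _, huw⟩) <;>
    · have hub : G.edist u v ≤ (n : ℕ∞) := by
        calc G.edist u v ≤ G.edist u w + G.edist w v := SimpleGraph.edist_triangle
        _ ≤ G.edist u w + 1 := add_le_add_right
            (by rw [SimpleGraph.edist_comm]; exact le_of_eq (edist_eq_one_iff_adj.mpr hadj)) _
        _ = (n : ℕ∞) := by rw [← hn, ← hrw, huw]
      have hlb : (n : ℕ∞) ≤ G.edist u v + 1 := by
        rw [← hn]
        calc G.edist r v ≤ G.edist r u + G.edist u v := SimpleGraph.edist_triangle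
        _ = 1 + G.edist u v := by rw [hru u huS]
        _ = G.edist u v + 1 := by ring
      rcases enat_aux hub hlb with h | h
      · exact Or.inr ⟨huS, by rw [h, hn]⟩
      · exact Or.inl ⟨huS, by rw [h, hn]⟩
end

section
/- Bit-parallel query decision rule, first case: let s and t be vertices with d_G(s, r) < ∞ and d_G(r, t) < ∞, and set δ̃ = d_G(s, r) + d_G(r, t) and δ = min_{u ∈ {r} ∪ S_r} ( d_G(s, u) + d_G(u, t) ). Then δ = δ̃ - 2 if and only if S^{-1}_r(s) ∩ S^{-1}_r(t) ≠ ∅. -/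
open SimpleGraph

/-- Bit-parallel query decision rule, first case: with `δ̃ = d_G(s, r) + d_G(r, t)` and
`δ = min_{u ∈ {r} ∪ S_r} (d_G(s, u) + d_G(u, t))`, we have `δ = δ̃ - 2` (i.e.
`δ + 2 = δ̃`) if and only if `S^{-1}_r(s) ∩ S^{-1}_r(t) ≠ ∅`. -/
theorem bp_query_case_two {V : Type*} (G : SimpleGraph V) (r : V) (S : Set V)
    (hS : S ⊆ G.neighborSet r) (s t : V)
    (hs : G.edist s r < ⊤) (ht : G.edist r t < ⊤) :
    (⨅ u ∈ insert r S, (G.edist s u + G.edist u t)) + 2 =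
        G.edist s r + G.edist r t ↔
      (Sneg G r S s ∩ Sneg G r S t).Nonempty := by
  set a := G.edist s r with ha
  set b := G.edist r t with hb
  set δ := ⨅ u ∈ insert r S, (G.edist s u + G.edist u t) with hδ
  have hur : ∀ u ∈ S, G.edist u r = 1 := fun u hu =>
    edist_eq_one_iff_adj.2 ((hS hu).symm)
  have hlow : ∀ u ∈ S, a + b ≤ (G.edist s u + G.edist u t) + 2 := by
    intro u hu
    have h1 : a ≤ G.edist s u + 1 := by
      calc a ≤ G.edist s u + G.edist u r := G.edist_triangle
        _ = G.edist s u + 1 := by rw [hur u hu]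
    have h2 : b ≤ 1 + G.edist u t := by
      calc b ≤ G.edist r u + G.edist u t := G.edist_triangle
        _ = 1 + G.edist u t := by rw [edist_comm, hur u hu]
    calc a + b ≤ (G.edist s u + 1) + (1 + G.edist u t) := add_le_add h1 h2
      _ = (G.edist s u + G.edist u t) + 2 := by ring
  have hδr : δ ≤ a + b := iInf₂_le_of_le r (Set.mem_insert r S) le_rfl
  have hab : a + b ≠ ⊤ := by
    intro htop
    rcases WithTop.add_eq_top.1 htop with h | h
    · exact hs.ne h
    · exact ht.ne h
  constructor
  · intro h
    have hδne : δ ≠ ⊤ := by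
      intro htop
      rw [htop, top_add] at h
      exact hab h.symm
    have hδlt : δ < δ + 1 := (ENat.lt_add_one_iff hδne).2 le_rfl
    have hex : ∃ u ∈ insert r S, G.edist s u + G.edist u t < δ + 1 := by
      have h' : δ < δ + 1 := hδlt
      nth_rewrite 1 [hδ] at h'
      simpa [iInf_lt_iff] using h'
    obtain ⟨u, huS, hu⟩ := hex
    have hule : G.edist s u + G.edist u t ≤ δ := (ENat.lt_add_one_iff hδne).1 hu
    have hgle : δ ≤ G.edist s u + G.edist u t := iInf₂_le u huS
    have hfe : G.edist s u + G.edist u t = δ := le_antisymm hule hgle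
    have hune : u ≠ r := by
      rintro rfl
      have hle : δ + 2 ≤ δ := h.trans_le hule
      have hlt : δ < δ + 2 := lt_of_lt_of_le hδlt (add_le_add_right one_le_two δ)
      exact absurd hle (not_le.2 hlt)
    have huS' : u ∈ S := (Set.mem_insert_iff.1 huS).resolve_left hune
    have hsum : (G.edist s u + 1) + (G.edist u t + 1) = a + b := by
      rw [← h, ← hfe]; ring
    have hsune : G.edist s u ≠ ⊤ := by
      intro htop
      rw [htop, top_add] at hfe
      exact hδne hfe.symm
    have hutne : G.edist u t ≠ ⊤ := by
      intro htop
      rw [htop, add_top] at hfe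
      exact hδne hfe.symm
    have h1 : a ≤ G.edist s u + 1 := by
      calc a ≤ G.edist s u + G.edist u r := G.edist_triangle
        _ = G.edist s u + 1 := by rw [hur u huS']
    have h2 : b ≤ G.edist u t + 1 := by
      calc b ≤ G.edist r u + G.edist u t := G.edist_triangle
        _ = G.edist u t + 1 := by rw [SimpleGraph.edist_comm (u := r) (v := u), hur u huS', add_comm]
    have h1' : G.edist s u + 1 ≤ a := by
      have : (G.edist s u + 1) + b ≤ a + b := by
        calc (G.edist s u + 1) + b ≤ (G.edist s u + 1) + (G.edist u t + 1) :=
              add_le_add_right h2 _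
          _ = a + b := hsum
      exact (WithTop.add_le_add_iff_right ht.ne).1 this
    have h2' : G.edist u t + 1 ≤ b := by
      have : a + (G.edist u t + 1) ≤ a + b := by
        calc a + (G.edist u t + 1) ≤ (G.edist s u + 1) + (G.edist u t + 1) :=
              add_le_add_left h1 _
          _ = a + b := hsum
      exact (WithTop.add_le_add_iff_left hs.ne).1 this
    refine ⟨u, ⟨huS', ?_⟩, ⟨huS', ?_⟩⟩
    · rw [SimpleGraph.edist_comm (u := u) (v := s), SimpleGraph.edist_comm (u := r) (v := s)]
      exact le_antisymm h1' h1
    · exact le_antisymm h2' h2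
  · rintro ⟨u, ⟨⟨huS, hus⟩, ⟨_, hut⟩⟩⟩
    have hus' : G.edist s u + 1 = a := by
      rw [SimpleGraph.edist_comm (u := s) (v := u), ha, SimpleGraph.edist_comm (u := s) (v := r)]; exact hus
    have hut' : G.edist u t + 1 = b := hut
    have hup : δ + 2 ≤ a + b := by
      have : δ ≤ G.edist s u + G.edist u t := iInf₂_le u (Set.mem_insert_of_mem r huS)
      calc δ + 2 ≤ (G.edist s u + G.edist u t) + 2 := add_le_add_left this 2
        _ = (G.edist s u + 1) + (G.edist u t + 1) := by ring
        _ = a + b := by rw [hus', hut']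
    have h2ab : 2 ≤ a + b := by
      have ha1 : 1 ≤ a := hus' ▸ le_add_self
      have hb1 : 1 ≤ b := hut' ▸ le_add_self
      calc (2 : ℕ∞) = 1 + 1 := by norm_num
        _ ≤ a + b := add_le_add ha1 hb1
    have hlowδ : a + b - 2 ≤ δ := by
      refine le_iInf₂ fun v hv => ?_
      rcases Set.mem_insert_iff.1 hv with hveq | hvS
      · rw [hveq]
        exact tsub_le_self
      · exact tsub_le_iff_right.2 (hlow v hvS)
    have hdown : a + b ≤ δ + 2 := by
      calc a + b = (a + b - 2) + 2 := (tsub_add_cancel_of_le h2ab).symm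
        _ ≤ δ + 2 := add_le_add_left hlowδ 2
    exact le_antisymm hup hdown
end

section
/- Bit-parallel query decision rule, second case: let s and t be vertices with d_G(s, r) < ∞ and d_G(r, t) < ∞, and set δ̃ = d_G(s, r) + d_G(r, t) and δ = min_{u ∈ {r} ∪ S_r} ( d_G(s, u) + d_G(u, t) ). Then δ = δ̃ - 1 if and only if S^{-1}_r(s) ∩ S^{-1}_r(t) = ∅ and at least one of S^0_r(s) ∩ S^{-1}_r(t) ≠ ∅ or S^{-1}_r(s) ∩ S^0_r(t) ≠ ∅ holds. -/
open SimpleGraph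

/-- Bit-parallel query decision rule, second case: with `δ̃ = d_G(s, r) + d_G(r, t)` and
`δ = min_{u ∈ {r} ∪ S_r} (d_G(s, u) + d_G(u, t))`, we have `δ = δ̃ - 1` (i.e.
`δ + 1 = δ̃`) if and only if `S^{-1}_r(s) ∩ S^{-1}_r(t) = ∅` and at least one of
`S^0_r(s) ∩ S^{-1}_r(t) ≠ ∅` or `S^{-1}_r(s) ∩ S^0_r(t) ≠ ∅` holds. -/
theorem bp_query_case_one {V : Type*} (G : SimpleGraph V) (r : V) (S : Set V)
    (hS : S ⊆ G.neighborSet r) (s t : V)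
    (hs : G.edist s r < ⊤) (ht : G.edist r t < ⊤) :
    (⨅ u ∈ insert r S, (G.edist s u + G.edist u t)) + 1 =
        G.edist s r + G.edist r t ↔
      (Sneg G r S s ∩ Sneg G r S t = ∅ ∧
        ((Szero G r S s ∩ Sneg G r S t).Nonempty ∨
         (Sneg G r S s ∩ Szero G r S t).Nonempty)) := by
  classical
  have ec : ∀ x y : V, G.edist x y = G.edist y x := fun x y => G.edist_comm
  have haT : G.edist s r ≠ ⊤ := hs.ne
  have hbT : G.edist r t ≠ ⊤ := ht.ne
  have habT : G.edist s r + G.edist r t ≠ ⊤ := WithTop.add_ne_top.mpr ⟨haT, hbT⟩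
  set I : ℕ∞ := ⨅ u ∈ insert r S, (G.edist s u + G.edist u t) with hIdef
  have hur : ∀ u ∈ S, G.edist u r = 1 := fun u hu =>
    edist_eq_one_iff_adj.mpr (hS hu).symm
  have h1 : ∀ u ∈ S, G.edist s r ≤ G.edist s u + 1 := fun u hu => by
    calc G.edist s r ≤ G.edist s u + G.edist u r := G.edist_triangle
    _ = G.edist s u + 1 := by rw [hur u hu]
  have h2 : ∀ u ∈ S, G.edist s u ≤ G.edist s r + 1 := fun u hu => by
    calc G.edist s u ≤ G.edist s r + G.edist r u := G.edist_triangle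
    _ = G.edist s r + 1 := by rw [ec r u, hur u hu]
  have h3 : ∀ u ∈ S, G.edist r t ≤ G.edist u t + 1 := fun u hu => by
    calc G.edist r t ≤ G.edist r u + G.edist u t := G.edist_triangle
    _ = G.edist u t + 1 := by rw [ec r u, hur u hu, add_comm]
  have h4 : ∀ u ∈ S, G.edist u t ≤ G.edist r t + 1 := fun u hu => by
    calc G.edist u t ≤ G.edist u r + G.edist r t := G.edist_triangle
    _ = G.edist r t + 1 := by rw [hur u hu, add_comm]
  have hxT : ∀ u ∈ S, G.edist s u ≠ ⊤ := fun u hu =>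
    ne_top_of_le_ne_top (WithTop.add_ne_top.mpr ⟨haT, WithTop.one_ne_top⟩) (h2 u hu)
  have hyT : ∀ u ∈ S, G.edist u t ≠ ⊤ := fun u hu =>
    ne_top_of_le_ne_top (WithTop.add_ne_top.mpr ⟨hbT, WithTop.one_ne_top⟩) (h4 u hu)
  have hIle : I ≤ G.edist s r + G.edist r t := by
    rw [hIdef]
    exact iInf₂_le_of_le r (Set.mem_insert r S) le_rfl
  constructor
  · intro hI
    have hInt : I ≠ ⊤ := ne_top_of_le_ne_top habT (hI ▸ le_self_add)
    have hIlt : I < G.edist s r + G.edist r t := by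
      rw [← hI]; exact (ENat.lt_add_one_iff hInt).mpr le_rfl
    have hdisj : Sneg G r S s ∩ Sneg G r S t = ∅ := by
      rw [Set.eq_empty_iff_forall_notMem]
      rintro u ⟨⟨huS, hus⟩, ⟨-, hut⟩⟩
      have hle : I + 2 ≤ I + 1 := by
        calc I + 2 ≤ (G.edist s u + G.edist u t) + 2 := by
              gcongr
              rw [hIdef]
              exact iInf₂_le u (Set.mem_insert_of_mem _ huS)
        _ = (G.edist u s + 1) + (G.edist u t + 1) := by rw [ec s u]; ring
        _ = G.edist s r + G.edist r t := by rw [hus, hut, ec r s]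
        _ = I + 1 := hI.symm
      have h21 := (WithTop.add_le_add_iff_left hInt).mp hle
      norm_num at h21
      change ((2:ℕ) : ℕ∞) ≤ ((1:ℕ) : ℕ∞) at h21
      exact absurd (Nat.cast_le.mp h21) (by norm_num)
    refine ⟨hdisj, ?_⟩
    obtain ⟨u, hu, hfu⟩ :
        ∃ u ∈ insert r S, G.edist s u + G.edist u t < G.edist s r + G.edist r t := by
      rw [hIdef] at hIlt
      simpa only [iInf_lt_iff, exists_prop] using hIlt
    have huS : u ∈ S := by
      rcases hu with rfl | huS
      · exact absurd hfu (lt_irrefl _)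
      · exact huS
    have hfuI : G.edist s u + G.edist u t = I := by
      rw [← hI] at hfu
      exact le_antisymm ((ENat.lt_add_one_iff hInt).mp hfu)
        (by rw [hIdef]; exact iInf₂_le u (Set.mem_insert_of_mem _ huS))
    have hkey : G.edist s u + G.edist u t + 1 = G.edist s r + G.edist r t := by
      rw [hfuI, hI]
    obtain ⟨x, hx⟩ : ∃ x : ℕ, G.edist s u = x := ⟨_, (ENat.coe_toNat (hxT u huS)).symm⟩
    obtain ⟨y, hy⟩ : ∃ y : ℕ, G.edist u t = y := ⟨_, (ENat.coe_toNat (hyT u huS)).symm⟩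
    obtain ⟨a, ha⟩ : ∃ a : ℕ, G.edist s r = a := ⟨_, (ENat.coe_toNat haT).symm⟩
    obtain ⟨b, hb⟩ : ∃ b : ℕ, G.edist r t = b := ⟨_, (ENat.coe_toNat hbT).symm⟩
    have e1 : x + y + 1 = a + b := by
      rw [hx, hy, ha, hb] at hkey; exact_mod_cast hkey
    have e2 : a ≤ x + 1 := by
      have h := h1 u huS; rw [hx, ha] at h; exact_mod_cast h
    have e3 : b ≤ y + 1 := by
      have h := h3 u huS; rw [hy, hb] at h; exact_mod_cast h
    rcases (by omega : (x = a ∧ y + 1 = b) ∨ (x + 1 = a ∧ y = b)) with ⟨exa, eyb⟩ | ⟨exa, eyb⟩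
    · left
      refine ⟨u, ⟨huS, ?_⟩, ⟨huS, ?_⟩⟩
      · rw [ec u s, hx, ec r s, ha]; exact_mod_cast exa
      · rw [hy, hb]; exact_mod_cast eyb
    · right
      refine ⟨u, ⟨huS, ?_⟩, ⟨huS, ?_⟩⟩
      · rw [ec u s, hx, ec r s, ha]; exact_mod_cast exa
      · rw [hy, hb]; exact_mod_cast eyb
  · rintro ⟨hdisj, hwit⟩
    obtain ⟨u, huS, hfu⟩ :
        ∃ u ∈ S, G.edist s u + G.edist u t + 1 = G.edist s r + G.edist r t := by
      rcases hwit with ⟨u, ⟨huS, hus⟩, ⟨-, hut⟩⟩ | ⟨u, ⟨huS, hus⟩, ⟨-, hut⟩⟩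
      · exact ⟨u, huS, by rw [add_assoc, hut, ec s u, hus, ec r s]⟩
      · exact ⟨u, huS, by rw [add_right_comm, ec s u, hus, hut, ec r s]⟩
    have hle : I + 1 ≤ G.edist s r + G.edist r t := by
      rw [← hfu]
      gcongr
      rw [hIdef]
      exact iInf₂_le u (Set.mem_insert_of_mem _ huS)
    have hlow : ∀ v ∈ insert r S,
        G.edist s r + G.edist r t - 1 ≤ G.edist s v + G.edist v t := by
      rintro v (rfl | hvS)
      · exact tsub_le_iff_right.mpr le_self_add
      · refine tsub_le_iff_right.mpr ?_
        by_contra hcon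
        push_neg at hcon
        obtain ⟨x, hx⟩ : ∃ x : ℕ, G.edist s v = x := ⟨_, (ENat.coe_toNat (hxT v hvS)).symm⟩
        obtain ⟨y, hy⟩ : ∃ y : ℕ, G.edist v t = y := ⟨_, (ENat.coe_toNat (hyT v hvS)).symm⟩
        obtain ⟨a, ha⟩ : ∃ a : ℕ, G.edist s r = a := ⟨_, (ENat.coe_toNat haT).symm⟩
        obtain ⟨b, hb⟩ : ∃ b : ℕ, G.edist r t = b := ⟨_, (ENat.coe_toNat hbT).symm⟩
        have e1 : x + y + 1 < a + b := by
          rw [hx, hy, ha, hb] at hcon; exact_mod_cast hcon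
        have e2 : a ≤ x + 1 := by
          have h := h1 v hvS; rw [hx, ha] at h; exact_mod_cast h
        have e3 : b ≤ y + 1 := by
          have h := h3 v hvS; rw [hy, hb] at h; exact_mod_cast h
        have hv : v ∈ Sneg G r S s ∩ Sneg G r S t := by
          refine ⟨⟨hvS, ?_⟩, ⟨hvS, ?_⟩⟩
          · rw [ec v s, hx, ec r s, ha]
            exact_mod_cast (by omega : x + 1 = a)
          · rw [hy, hb]
            exact_mod_cast (by omega : y + 1 = b)
        rw [hdisj] at hv
        exact hv
    have hlowI : G.edist s r + G.edist r t - 1 ≤ I := by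
      rw [hIdef]; exact le_iInf₂ hlow
    have hone : 1 ≤ G.edist s r + G.edist r t := by
      rw [← hfu]; exact le_add_self
    have hge : G.edist s r + G.edist r t ≤ I + 1 := by
      calc G.edist s r + G.edist r t
          = (G.edist s r + G.edist r t - 1) + 1 := (tsub_add_cancel_of_le hone).symm
        _ ≤ I + 1 := by gcongr
    exact le_antisymm hle hge
end
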